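/- For the trigonometric interpolation projection Q_N onto T_N = span{e_n : -N/2 ≤ n < N/2} and periodic Sobolev spaces, if q ≥ 0, r ≥ 0, q + r > 1/2, then there is C_{q,r} > 0 with ‖Q_N f - f‖_q ≤ C_{q,r} N^{-r}‖f‖_{q+r} for all f ∈ H^{q+r} and all N. -/
import Mathlib


/-- Sobolev weight: `w_s(0) = 1`, `w_s(n) = |n|^s` for `n ≠ 0` (real exponent). -/
noncomputable def sobW (s : ℝ) (n : ℤ) : ℝ := if n = 0 then 1 else |(n : ℝ)| ^ s

/-- Squared periodic Sobolev norm of order `s`, in terms of Fourier coefficients: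
`‖φ‖_s² = |φ̂(0)|² + Σ_{n≠0} |n|^{2s}|φ̂(n)|²`. -/
noncomputable def sobSq (s : ℝ) (φ : ℤ → ℂ) : ℝ := ∑' n : ℤ, sobW (2 * s) n * ‖φ n‖ ^ 2

/-- Fourier coefficients of the trigonometric interpolant `Q_N f` onto
`T_N = span{e_n : -N/2 ≤ n < N/2}` at the uniform grid, given by the aliasing formula
`(Q_N f)^(n) = Σ_ℓ f̂(n + ℓN)` for `-N/2 ≤ n < N/2`, and `0` otherwise. -/
noncomputable def QN (N : ℕ) (φ : ℤ → ℂ) : ℤ → ℂ :=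
  fun n => if -(N : ℤ) ≤ 2 * n ∧ 2 * n < (N : ℤ) then ∑' ℓ : ℤ, φ (n + ℓ * N) else 0

lemma sobW_nonneg (t : ℝ) (n : ℤ) : 0 ≤ sobW t n := by
  unfold sobW; split
  · norm_num
  · positivity

lemma tsum_cauchy_schwarz {ι : Type*} {u v : ι → ℝ} (hu0 : ∀ i, 0 ≤ u i) (hv0 : ∀ i, 0 ≤ v i)
    (hu : Summable fun i => u i ^ 2) (hv : Summable fun i => v i ^ 2) :
    Summable (fun i => u i * v i) ∧
      ∑' i, u i * v i ≤ Real.sqrt (∑' i, u i ^ 2) * Real.sqrt (∑' i, v i ^ 2) := by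
  have hsum : Summable fun i => u i * v i := by
    apply Summable.of_nonneg_of_le (fun i => mul_nonneg (hu0 i) (hv0 i))
      (fun i => ?_) ((hu.add hv).div_const 2)
    have := two_mul_le_add_sq (u i) (v i)
    linarith
  refine ⟨hsum, Summable.tsum_le_of_sum_le hsum fun s => ?_⟩
  have h1 : (∑ i ∈ s, u i * v i) ^ 2 ≤ (∑ i ∈ s, u i ^ 2) * ∑ i ∈ s, v i ^ 2 :=
    Finset.sum_mul_sq_le_sq_mul_sq s u v
  have h2 : ∑ i ∈ s, u i ^ 2 ≤ ∑' i, u i ^ 2 := Summable.sum_le_tsum s (fun i _ => sq_nonneg _) hu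
  have h3 : ∑ i ∈ s, v i ^ 2 ≤ ∑' i, v i ^ 2 := Summable.sum_le_tsum s (fun i _ => sq_nonneg _) hv
  have hs0 : 0 ≤ ∑ i ∈ s, u i * v i := Finset.sum_nonneg fun i _ => mul_nonneg (hu0 i) (hv0 i)
  calc ∑ i ∈ s, u i * v i = Real.sqrt ((∑ i ∈ s, u i * v i) ^ 2) := (Real.sqrt_sq hs0).symm
    _ ≤ Real.sqrt ((∑' i, u i ^ 2) * ∑' i, v i ^ 2) := by
        apply Real.sqrt_le_sqrt
        calc (∑ i ∈ s, u i * v i) ^ 2 ≤ (∑ i ∈ s, u i ^ 2) * ∑ i ∈ s, v i ^ 2 := h1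
          _ ≤ (∑' i, u i ^ 2) * ∑' i, v i ^ 2 :=
              mul_le_mul h2 h3 (Finset.sum_nonneg fun i _ => sq_nonneg _)
                (tsum_nonneg fun i => sq_nonneg _)
    _ = _ := Real.sqrt_mul (tsum_nonneg fun i => sq_nonneg _) _

/-- Interpolation error estimate: for `q ≥ 0`, `r ≥ 0`, `q + r > 1/2` there is `C > 0`
with `‖Q_N f - f‖_q ≤ C N^{-r} ‖f‖_{q+r}` for all `N ≥ 1` and all `f ∈ H^{q+r}`. -/
theorem interpolation_error (q r : ℝ) (hq : 0 ≤ q) (hr : 0 ≤ r) (hqr : 1 / 2 < q + r) :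
    ∃ C > 0, ∀ N : ℕ, 1 ≤ N → ∀ φ : ℤ → ℂ,
      Summable (fun n : ℤ => sobW (2 * (q + r)) n * ‖φ n‖ ^ 2) →
      Real.sqrt (sobSq q (fun n => QN N φ n - φ n)) ≤
        C * (N : ℝ) ^ (-r) * Real.sqrt (sobSq (q + r) φ) := by
  have hs1 : (1:ℝ) < 2 * (q + r) := by linarith
  have hZsum : Summable fun ℓ : ℤ => |(ℓ:ℝ)| ^ (-(2 * (q + r))) := Real.summable_abs_int_rpow hs1
  set Z : ℝ := ∑' ℓ : ℤ, |(ℓ:ℝ)| ^ (-(2 * (q + r))) with hZdef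
  have hZ1 : (1:ℝ) ≤ Z := by
    have := Summable.le_tsum hZsum 1 (fun ℓ _ => Real.rpow_nonneg (abs_nonneg _) _)
    simpa using this
  have hZ0 : (0:ℝ) < Z := lt_of_lt_of_le one_pos hZ1
  set K : ℝ := (2:ℝ) ^ (2 * (q + r)) * Z + (2:ℝ) ^ (2 * r) with hKdef
  have hK0 : (0:ℝ) < K := by positivity
  refine ⟨Real.sqrt K, Real.sqrt_pos.mpr hK0, ?_⟩
  intro N hN φ hS
  have hN0 : (0:ℝ) < N := by exact_mod_cast hN
  have hN1 : (1:ℝ) ≤ N := by exact_mod_cast hN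
  have hNz : (N:ℤ) ≠ 0 := by omega
  set W : ℤ → ℝ := fun n => sobW (2 * (q + r)) n with hWdef
  have hterm0 : ∀ n, 0 ≤ W n * ‖φ n‖ ^ 2 := fun n => mul_nonneg (sobW_nonneg _ _) (sq_nonneg _)
  set A : ℝ := ∑' n : ℤ, W n * ‖φ n‖ ^ 2 with hAdef
  have hA0 : 0 ≤ A := tsum_nonneg hterm0
  set V : ℤ → ℝ := fun n => ∑' ℓ : ℤ, if ℓ = 0 then 0 else W (n + ℓ * N) * ‖φ (n + ℓ * N)‖ ^ 2
    with hVdef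
  have hV0 : ∀ n, 0 ≤ V n := by
    intro n
    apply tsum_nonneg
    intro ℓ
    split
    · exact le_rfl
    · exact hterm0 _
  set bnd : ℤ → ℝ := fun n =>
    if -(N : ℤ) ≤ 2 * n ∧ 2 * n < (N : ℤ) then (2:ℝ) ^ (2 * (q + r)) * Z * V n
    else (2:ℝ) ^ (2 * r) * (W n * ‖φ n‖ ^ 2) with hbnddef
  -- pointwise key estimate
  have key : ∀ n : ℤ, sobW (2 * q) n * ‖QN N φ n - φ n‖ ^ 2 ≤ (N:ℝ) ^ (-(2 * r)) * bnd n := by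
    intro n
    by_cases hP : -(N : ℤ) ≤ 2 * n ∧ 2 * n < (N : ℤ)
    · -- in band
      have hball : ∀ ℓ : ℤ, ℓ ≠ 0 → (N:ℝ) * |(ℓ:ℝ)| ≤ 2 * |((n + ℓ * N : ℤ) : ℝ)| := by
        intro ℓ hl
        have hint : (N:ℤ) * |ℓ| ≤ 2 * |n + ℓ * N| := by
          have hNpos : (1:ℤ) ≤ (N:ℤ) := by exact_mod_cast hN
          have hl1 : (1:ℤ) ≤ |ℓ| := Int.one_le_abs hl
          have habs : |2 * ℓ * (N:ℤ)| ≤ |2 * n + 2 * ℓ * N| + |2 * n| := by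
            calc |2 * ℓ * (N:ℤ)| = |(2 * n + 2 * ℓ * N) + (-(2 * n))| := by ring_nf
              _ ≤ |2 * n + 2 * ℓ * N| + |(-(2 * n))| := abs_add_le _ _
              _ = |2 * n + 2 * ℓ * N| + |2 * n| := by rw [abs_neg]
          have h2l : |2 * ℓ * (N:ℤ)| = 2 * |ℓ| * N := by
            rw [show 2 * ℓ * (N:ℤ) = 2 * (ℓ * N) by ring, abs_mul, abs_mul,
              abs_of_nonneg (by omega : (0:ℤ) ≤ (N:ℤ))]
            norm_num
            ring
          have h2n : |2 * n| ≤ (N:ℤ) := abs_le.mpr ⟨by omega, by omega⟩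
          have h2x : |2 * n + 2 * ℓ * N| = 2 * |n + ℓ * N| := by
            rw [show 2 * n + 2 * ℓ * (N:ℤ) = 2 * (n + ℓ * N) by ring, abs_mul]
            norm_num
          nlinarith
        exact_mod_cast hint
      have hl1r : ∀ ℓ : ℤ, ℓ ≠ 0 → (1:ℝ) ≤ |(ℓ:ℝ)| := by
        intro ℓ hl
        exact_mod_cast Int.one_le_abs hl
      have hxpos : ∀ ℓ : ℤ, ℓ ≠ 0 → 0 < |((n + ℓ * N : ℤ) : ℝ)| := by
        intro ℓ hl
        have h1 := hball ℓ hl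
        have h2 := hl1r ℓ hl
        nlinarith
      have hne : ∀ ℓ : ℤ, ℓ ≠ 0 → (n + ℓ * N : ℤ) ≠ 0 := by
        intro ℓ hl h0
        have := hxpos ℓ hl
        rw [h0] at this
        simp at this
      set u : ℤ → ℝ := fun ℓ => if ℓ = 0 then 0 else |((n + ℓ * N : ℤ) : ℝ)| ^ (-(q + r)) with hu
      set v : ℤ → ℝ := fun ℓ =>
        if ℓ = 0 then 0 else |((n + ℓ * N : ℤ) : ℝ)| ^ (q + r) * ‖φ (n + ℓ * N)‖ with hv
      have hu0 : ∀ ℓ, 0 ≤ u ℓ := by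
        intro ℓ
        simp only [hu]
        split
        · exact le_rfl
        · positivity
      have hv0 : ∀ ℓ, 0 ≤ v ℓ := by
        intro ℓ
        simp only [hv]
        split
        · exact le_rfl
        · positivity
      have husq : ∀ ℓ : ℤ, u ℓ ^ 2 = if ℓ = 0 then 0
          else |((n + ℓ * N : ℤ) : ℝ)| ^ (-(2 * (q + r))) := by
        intro ℓ
        simp only [hu]
        split
        · norm_num
        · rw [← Real.rpow_natCast (|((n + ℓ * N : ℤ) : ℝ)| ^ (-(q + r))) 2,
            ← Real.rpow_mul (abs_nonneg _)]
          norm_num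
          congr 1
          ring
      have hhalf : ((N:ℝ)/2) ^ (-(2*(q+r))) = (2:ℝ)^(2*(q+r)) * (N:ℝ)^(-(2*(q+r))) := by
        rw [Real.div_rpow hN0.le (by norm_num : (0:ℝ) ≤ 2), div_eq_mul_inv,
          ← Real.rpow_neg (by norm_num : (0:ℝ) ≤ 2), neg_neg]
        ring
      have husq_le : ∀ ℓ : ℤ, u ℓ ^ 2 ≤
          (2:ℝ) ^ (2 * (q + r)) * (N:ℝ) ^ (-(2 * (q + r))) * |(ℓ:ℝ)| ^ (-(2 * (q + r))) := by
        intro ℓ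
        rw [husq ℓ]
        by_cases hl : ℓ = 0
        · rw [if_pos hl, hl]
          simp only [Int.cast_zero, abs_zero]
          rw [Real.zero_rpow (by linarith : -(2 * (q + r)) ≠ 0)]
          simp
        · rw [if_neg hl]
          have h1 : ((N:ℝ)/2) * |(ℓ:ℝ)| ≤ |((n + ℓ * N : ℤ) : ℝ)| := by
            have := hball ℓ hl
            linarith
          have h2 : (0:ℝ) < ((N:ℝ)/2) * |(ℓ:ℝ)| := by
            have := hl1r ℓ hl
            nlinarith
          calc |((n + ℓ * N : ℤ) : ℝ)| ^ (-(2 * (q + r)))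
              ≤ (((N:ℝ)/2) * |(ℓ:ℝ)|) ^ (-(2 * (q + r))) :=
                Real.rpow_le_rpow_of_nonpos h2 h1 (by linarith)
            _ = (2:ℝ) ^ (2 * (q + r)) * (N:ℝ) ^ (-(2 * (q + r))) * |(ℓ:ℝ)| ^ (-(2 * (q + r))) := by
                rw [Real.mul_rpow (by positivity) (abs_nonneg _), hhalf]
      have hu2sum : Summable fun ℓ => u ℓ ^ 2 :=
        Summable.of_nonneg_of_le (fun ℓ => sq_nonneg _) husq_le (hZsum.mul_left _)
      have hu2le : ∑' ℓ, u ℓ ^ 2 ≤ (2:ℝ) ^ (2*(q+r)) * (N:ℝ) ^ (-(2*(q+r))) * Z := by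
        calc ∑' ℓ, u ℓ ^ 2
            ≤ ∑' ℓ : ℤ, (2:ℝ)^(2*(q+r)) * (N:ℝ)^(-(2*(q+r))) * |(ℓ:ℝ)| ^ (-(2*(q+r))) :=
              Summable.tsum_le_tsum husq_le hu2sum (hZsum.mul_left _)
          _ = (2:ℝ) ^ (2*(q+r)) * (N:ℝ) ^ (-(2*(q+r))) * Z := by
              rw [tsum_mul_left, hZdef]
      have hinjℓ : Function.Injective fun ℓ : ℤ => n + ℓ * (N:ℤ) := by
        intro a b hab
        simp only at hab
        exact mul_right_cancel₀ hNz (add_left_cancel hab)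
      have hcomp : Summable fun ℓ : ℤ => W (n + ℓ * N) * ‖φ (n + ℓ * N)‖ ^ 2 :=
        hS.comp_injective hinjℓ
      have hvsq : ∀ ℓ : ℤ, v ℓ ^ 2 = if ℓ = 0 then 0
          else W (n + ℓ * N) * ‖φ (n + ℓ * N)‖ ^ 2 := by
        intro ℓ
        simp only [hv]
        split
        · norm_num
        · rename_i hl
          rw [mul_pow]
          congr 1
          rw [hWdef]
          simp only
          unfold sobW
          rw [if_neg (hne ℓ hl)]
          rw [← Real.rpow_natCast (|((n + ℓ * N : ℤ) : ℝ)| ^ (q + r)) 2,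
            ← Real.rpow_mul (abs_nonneg _)]
          norm_num
          congr 1
          ring
      have hv2sum : Summable fun ℓ => v ℓ ^ 2 := by
        apply Summable.of_nonneg_of_le (fun ℓ => sq_nonneg _) _ hcomp
        intro ℓ
        rw [hvsq ℓ]
        split
        · exact hterm0 _
        · exact le_rfl
      have hv2eq : ∑' ℓ, v ℓ ^ 2 = V n := by
        rw [hVdef]
        exact tsum_congr hvsq
      obtain ⟨hsumuv, hCS⟩ := tsum_cauchy_schwarz hu0 hv0 hu2sum hv2sum
      have huv : ∀ ℓ : ℤ, u ℓ * v ℓ = if ℓ = 0 then 0 else ‖φ (n + ℓ * N)‖ := by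
        intro ℓ
        simp only [hu, hv]
        split
        · norm_num
        · rename_i hl
          rw [← mul_assoc, Real.rpow_neg (abs_nonneg _),
            inv_mul_cancel₀ (ne_of_gt (Real.rpow_pos_of_pos (hxpos ℓ hl) _)), one_mul]
      have h1 : Summable fun ℓ : ℤ => if ℓ = 0 then 0 else ‖φ (n + ℓ * N)‖ :=
        hsumuv.congr huv
      have h2 : Summable fun ℓ : ℤ => if ℓ = 0 then ‖φ (n + ℓ * N)‖ else 0 := by
        apply Summable.congr (f := fun ℓ : ℤ => if ℓ = 0 then ‖φ (n + 0 * N)‖ else 0)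
        · exact (hasSum_ite_eq (0:ℤ) ‖φ (n + 0 * N)‖).summable
        · intro ℓ
          by_cases hl : ℓ = 0 <;> simp [hl]
      have hnormsum : Summable fun ℓ : ℤ => ‖φ (n + ℓ * N)‖ := by
        apply Summable.congr (h1.add h2)
        intro ℓ
        by_cases hl : ℓ = 0 <;> simp [hl]
      have hφsum : Summable fun ℓ : ℤ => φ (n + ℓ * N) := hnormsum.of_norm
      have herr : QN N φ n - φ n = ∑' ℓ : ℤ, if ℓ = 0 then 0 else φ (n + ℓ * N) := by
        simp only [QN, if_pos hP]
        rw [Summable.tsum_eq_add_tsum_ite hφsum 0]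
        simp only [zero_mul, add_zero]
        ring
      have hnorm_le : ‖QN N φ n - φ n‖ ≤ ∑' ℓ, u ℓ * v ℓ := by
        rw [herr]
        have hnn : Summable fun ℓ : ℤ => ‖if ℓ = 0 then (0:ℂ) else φ (n + ℓ * N)‖ := by
          apply h1.congr
          intro ℓ
          by_cases hl : ℓ = 0 <;> simp [hl]
        calc ‖∑' ℓ : ℤ, if ℓ = 0 then (0:ℂ) else φ (n + ℓ * N)‖
            ≤ ∑' ℓ : ℤ, ‖if ℓ = 0 then (0:ℂ) else φ (n + ℓ * N)‖ := norm_tsum_le_tsum_norm hnn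
          _ = ∑' ℓ, u ℓ * v ℓ := by
              apply tsum_congr
              intro ℓ
              rw [huv ℓ]
              by_cases hl : ℓ = 0 <;> simp [hl]
      have hsq : ‖QN N φ n - φ n‖ ^ 2 ≤ (∑' ℓ, u ℓ ^ 2) * (∑' ℓ, v ℓ ^ 2) := by
        have h0uv : 0 ≤ ∑' ℓ, u ℓ * v ℓ := tsum_nonneg fun ℓ => mul_nonneg (hu0 ℓ) (hv0 ℓ)
        calc ‖QN N φ n - φ n‖ ^ 2 ≤ (∑' ℓ, u ℓ * v ℓ) ^ 2 :=
              pow_le_pow_left₀ (norm_nonneg _) hnorm_le 2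
          _ ≤ (Real.sqrt (∑' ℓ, u ℓ ^ 2) * Real.sqrt (∑' ℓ, v ℓ ^ 2)) ^ 2 :=
              pow_le_pow_left₀ h0uv hCS 2
          _ = _ := by
              rw [mul_pow, Real.sq_sqrt (tsum_nonneg fun ℓ => sq_nonneg _),
                Real.sq_sqrt (tsum_nonneg fun ℓ => sq_nonneg _)]
      have hW2q : sobW (2 * q) n ≤ (N:ℝ) ^ (2 * q) := by
        unfold sobW
        split
        · exact Real.one_le_rpow hN1 (by linarith)
        · apply Real.rpow_le_rpow (abs_nonneg _) _ (by linarith)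
          have h : |n| ≤ (N:ℤ) := abs_le.mpr ⟨by omega, by omega⟩
          exact_mod_cast h
      simp only [hbnddef, if_pos hP]
      have hW2q0 : 0 ≤ sobW (2 * q) n := sobW_nonneg _ _
      calc sobW (2*q) n * ‖QN N φ n - φ n‖^2
          ≤ (N:ℝ)^(2*q) * ((∑' ℓ, u ℓ^2) * (∑' ℓ, v ℓ^2)) :=
            mul_le_mul hW2q hsq (by positivity) (by positivity)
        _ ≤ (N:ℝ)^(2*q) * (((2:ℝ)^(2*(q+r)) * (N:ℝ)^(-(2*(q+r))) * Z) * V n) := by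
            apply mul_le_mul_of_nonneg_left _ (by positivity)
            calc (∑' ℓ, u ℓ^2) * (∑' ℓ, v ℓ^2) = (∑' ℓ, u ℓ^2) * V n := by rw [hv2eq]
              _ ≤ ((2:ℝ)^(2*(q+r)) * (N:ℝ)^(-(2*(q+r))) * Z) * V n :=
                  mul_le_mul_of_nonneg_right hu2le (hV0 n)
        _ = (N:ℝ)^(-(2*r)) * ((2:ℝ)^(2*(q+r)) * Z * V n) := by
            rw [show (N:ℝ)^(2*q) * (((2:ℝ)^(2*(q+r)) * (N:ℝ)^(-(2*(q+r))) * Z) * V n)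
              = ((N:ℝ)^(2*q) * (N:ℝ)^(-(2*(q+r)))) * ((2:ℝ)^(2*(q+r)) * Z * V n) from by ring,
              ← Real.rpow_add hN0, show 2*q + -(2*(q+r)) = -(2*r) from by ring]
    · -- out of band
      have hn0 : n ≠ 0 := by
        rintro rfl
        exact hP ⟨by omega, by omega⟩
      have habs : (N:ℝ) ≤ 2 * |(n:ℝ)| := by
        have hint : (N:ℤ) ≤ 2 * |n| := by
          have h1 : (N:ℤ) ≤ |2*n| := by
            rcases not_and_or.mp hP with h | h
            · push_neg at h
              exact le_abs.mpr (Or.inr (by omega))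
            · push_neg at h
              exact le_abs.mpr (Or.inl h)
          rw [abs_mul] at h1
          simpa using h1
        exact_mod_cast hint
      have hnpos : (0:ℝ) < |(n:ℝ)| := by
        have h : (n:ℝ) ≠ 0 := Int.cast_ne_zero.mpr hn0
        positivity
      have hQ : QN N φ n = 0 := if_neg hP
      simp only [hbnddef, if_neg hP]
      rw [hQ, zero_sub, norm_neg]
      have h2cancel : (2:ℝ)^(2*r) * (2:ℝ)^(-(2*r)) = 1 := by
        rw [← Real.rpow_add two_pos]
        norm_num
      have hW2q : sobW (2*q) n ≤ (N:ℝ)^(-(2*r)) * ((2:ℝ)^(2*r)) * W n := by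
        rw [hWdef]
        simp only
        unfold sobW
        rw [if_neg hn0, if_neg hn0]
        have hsplit : |(n:ℝ)| ^ (2*q) = |(n:ℝ)| ^ (-(2*r)) * |(n:ℝ)| ^ (2*(q+r)) := by
          rw [← Real.rpow_add hnpos, show -(2*r) + 2*(q+r) = 2*q from by ring]
        rw [hsplit]
        apply mul_le_mul_of_nonneg_right _ (Real.rpow_nonneg (abs_nonneg _) _)
        calc |(n:ℝ)| ^ (-(2*r))
            = ((2:ℝ)^(2*r) * (2:ℝ)^(-(2*r))) * |(n:ℝ)|^(-(2*r)) := by rw [h2cancel, one_mul]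
          _ = (2:ℝ)^(2*r) * ((2 * |(n:ℝ)|)^(-(2*r))) := by
              rw [Real.mul_rpow (by norm_num : (0:ℝ) ≤ 2) (abs_nonneg _)]
              ring
          _ ≤ (2:ℝ)^(2*r) * (N:ℝ)^(-(2*r)) := by
              apply mul_le_mul_of_nonneg_left _ (by positivity)
              exact Real.rpow_le_rpow_of_nonpos hN0 habs (by linarith)
          _ = (N:ℝ)^(-(2*r)) * (2:ℝ)^(2*r) := by ring
      calc sobW (2*q) n * ‖φ n‖^2
          ≤ ((N:ℝ)^(-(2*r)) * (2:ℝ)^(2*r) * W n) * ‖φ n‖^2 :=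
            mul_le_mul_of_nonneg_right hW2q (sq_nonneg _)
        _ = (N:ℝ)^(-(2*r)) * ((2:ℝ)^(2*r) * (W n * ‖φ n‖^2)) := by ring
  -- injectivity arithmetic
  have hinj2 : ∀ {a b c d : ℤ}, (-(N:ℤ) ≤ 2*a ∧ 2*a < (N:ℤ)) → (-(N:ℤ) ≤ 2*c ∧ 2*c < (N:ℤ)) →
      a + b*(N:ℤ) = c + d*(N:ℤ) → a = c ∧ b = d := by
    intro a b c d ha hc h
    by_cases hbd : b = d
    · subst hbd
      exact ⟨add_right_cancel h, rfl⟩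
    · exfalso
      have hNpos : (1:ℤ) ≤ (N:ℤ) := by exact_mod_cast hN
      have h2 : c - a = (b - d) * (N:ℤ) := by linear_combination -h
      have h3 : (1:ℤ) ≤ |b - d| := Int.one_le_abs (sub_ne_zero.mpr hbd)
      have h4 : (N:ℤ) ≤ |c - a| := by
        rw [h2, abs_mul, abs_of_nonneg (by omega : (0:ℤ) ≤ (N:ℤ))]
        nlinarith
      have h5 : |c - a| < (N:ℤ) := by
        rw [abs_lt]
        omega
      omega
  have hinnerparts : Summable (fun n : ℤ => if -(N : ℤ) ≤ 2*n ∧ 2*n < (N:ℤ) then V n else 0) ∧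
      (∑' n : ℤ, if -(N : ℤ) ≤ 2*n ∧ 2*n < (N:ℤ) then V n else 0) ≤ A := by
    set H : ℤ × ℤ → ℝ := fun p =>
      if (-(N : ℤ) ≤ 2*p.1 ∧ 2*p.1 < (N:ℤ)) ∧ p.2 ≠ 0 then
        W (p.1 + p.2 * N) * ‖φ (p.1 + p.2 * N)‖ ^ 2 else 0 with hHdef
    have hH0 : ∀ p, 0 ≤ H p := fun p => by
      simp only [hHdef]
      split
      · exact hterm0 _
      · exact le_rfl
    set S : Set (ℤ × ℤ) := {p | (-(N : ℤ) ≤ 2*p.1 ∧ 2*p.1 < (N:ℤ)) ∧ p.2 ≠ 0} with hSdef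
    have heinj : Function.Injective (fun p : S => (p.1.1 + p.1.2 * N : ℤ)) := by
      rintro ⟨⟨a, b⟩, ha, hb⟩ ⟨⟨c, d⟩, hc, hd⟩ h
      simp only at h
      obtain ⟨h1, h2⟩ := hinj2 ha hc h
      simp only at h1
      simp [h1, h2]
    have hHSval : ∀ p : S, H p = W (p.1.1 + p.1.2 * N) * ‖φ (p.1.1 + p.1.2 * N)‖ ^ 2 := by
      rintro ⟨⟨a, b⟩, hp⟩
      exact if_pos hp
    have hHS : Summable (fun p : S => H p) := by
      rw [show (fun p : S => H p) =
        fun p : S => W (p.1.1 + p.1.2 * N) * ‖φ (p.1.1 + p.1.2 * N)‖ ^ 2 from funext hHSval]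
      exact hS.comp_injective heinj
    have hHsum : Summable H :=
      (summable_subtype_and_compl).mp
        ⟨hHS, summable_zero.congr fun p => (if_neg p.2).symm⟩
    have hHle : ∑' p, H p ≤ A := by
      have hsupp : Function.support H ⊆ S := by
        intro p hp
        by_contra hps
        exact hp (if_neg hps)
      rw [← tsum_subtype_eq_of_support_subset hsupp]
      exact Summable.tsum_le_tsum_of_inj _ heinj (fun c _ => hterm0 c)
        (fun p => le_of_eq (hHSval p)) hHS hS
    have hrow : ∀ n, Summable fun ℓ => H (n, ℓ) :=
      fun n => ((summable_prod_of_nonneg hH0).mp hHsum).1 n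
    have houter : Summable fun n => ∑' ℓ, H (n, ℓ) :=
      ((summable_prod_of_nonneg hH0).mp hHsum).2
    have hIeq : (fun n : ℤ => ∑' ℓ, H (n, ℓ)) =
        fun n : ℤ => if -(N : ℤ) ≤ 2*n ∧ 2*n < (N:ℤ) then V n else 0 := by
      funext n
      by_cases hP : -(N : ℤ) ≤ 2*n ∧ 2*n < (N:ℤ)
      · rw [if_pos hP, hVdef]
        apply tsum_congr
        intro ℓ
        by_cases hl : ℓ = 0 <;> simp [hHdef, hP, hl]
      · rw [if_neg hP]
        simp only [hHdef]
        convert tsum_zero with ℓ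
        rw [if_neg (by tauto)]
    exact ⟨hIeq ▸ houter, by rw [← hIeq, ← Summable.tsum_prod' hHsum hrow]; exact hHle⟩
  have hf2sum : Summable fun n : ℤ =>
      if -(N : ℤ) ≤ 2*n ∧ 2*n < (N:ℤ) then 0 else (2:ℝ)^(2*r) * (W n * ‖φ n‖^2) := by
    apply Summable.of_nonneg_of_le _ _ (hS.mul_left ((2:ℝ)^(2*r)))
    · intro n
      split
      · exact le_rfl
      · exact mul_nonneg (by positivity) (hterm0 n)
    · intro n
      split
      · exact mul_nonneg (by positivity) (hterm0 n)
      · exact le_rfl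
  have hbndeq : ∀ n, bnd n = ((2:ℝ)^(2*(q+r)) * Z) *
        (if -(N : ℤ) ≤ 2*n ∧ 2*n < (N:ℤ) then V n else 0)
      + (if -(N : ℤ) ≤ 2*n ∧ 2*n < (N:ℤ) then 0 else (2:ℝ)^(2*r) * (W n * ‖φ n‖^2)) := by
    intro n
    simp only [hbnddef]
    split_ifs <;> ring
  have hinnersum : Summable bnd :=
    ((hinnerparts.1.mul_left ((2:ℝ)^(2*(q+r)) * Z)).add hf2sum).congr fun n => (hbndeq n).symm
  have hinnerle : ∑' n, bnd n ≤ K * A := by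
    calc ∑' n, bnd n
        = (∑' n : ℤ, ((2:ℝ)^(2*(q+r)) * Z) *
            (if -(N : ℤ) ≤ 2*n ∧ 2*n < (N:ℤ) then V n else 0))
          + ∑' n : ℤ, (if -(N : ℤ) ≤ 2*n ∧ 2*n < (N:ℤ) then 0
              else (2:ℝ)^(2*r) * (W n * ‖φ n‖^2)) := by
          rw [← Summable.tsum_add (hinnerparts.1.mul_left _) hf2sum]
          exact tsum_congr hbndeq
      _ ≤ ((2:ℝ)^(2*(q+r)) * Z) * A + (2:ℝ)^(2*r) * A := by
          apply add_le_add
          · rw [tsum_mul_left]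
            exact mul_le_mul_of_nonneg_left hinnerparts.2 (by positivity)
          · calc ∑' n : ℤ, (if -(N : ℤ) ≤ 2*n ∧ 2*n < (N:ℤ) then 0
                  else (2:ℝ)^(2*r) * (W n * ‖φ n‖^2))
                ≤ ∑' n : ℤ, (2:ℝ)^(2*r) * (W n * ‖φ n‖^2) := by
                  apply Summable.tsum_le_tsum _ hf2sum (hS.mul_left _)
                  intro n
                  split
                  · exact mul_nonneg (by positivity) (hterm0 n)
                  · exact le_rfl
              _ = (2:ℝ)^(2*r) * A := tsum_mul_left
      _ = K * A := by rw [hKdef]; ring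
  -- combine
  have hsummand : Summable fun n => sobW (2 * q) n * ‖QN N φ n - φ n‖ ^ 2 :=
    Summable.of_nonneg_of_le (fun n => mul_nonneg (sobW_nonneg _ _) (sq_nonneg _)) key
      (hinnersum.mul_left _)
  have hfinal : sobSq q (fun n => QN N φ n - φ n) ≤ (N:ℝ) ^ (-(2 * r)) * (K * A) := by
    unfold sobSq
    calc ∑' n : ℤ, sobW (2 * q) n * ‖QN N φ n - φ n‖ ^ 2
        ≤ ∑' n : ℤ, (N:ℝ) ^ (-(2 * r)) * bnd n :=
          Summable.tsum_le_tsum key hsummand (hinnersum.mul_left _)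
      _ = (N:ℝ) ^ (-(2 * r)) * ∑' n, bnd n := tsum_mul_left
      _ ≤ (N:ℝ) ^ (-(2 * r)) * (K * A) := by
          exact mul_le_mul_of_nonneg_left hinnerle (Real.rpow_nonneg hN0.le _)
  have hsqrt : Real.sqrt ((N:ℝ) ^ (-(2 * r)) * (K * A)) =
      Real.sqrt K * (N:ℝ) ^ (-r) * Real.sqrt A := by
    have hpow : (N:ℝ) ^ (-(2 * r)) = ((N:ℝ) ^ (-r)) ^ (2:ℕ) := by
      rw [← Real.rpow_natCast ((N:ℝ) ^ (-r)) 2, ← Real.rpow_mul hN0.le]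
      norm_num
      ring_nf
    rw [Real.sqrt_mul (by positivity), Real.sqrt_mul hK0.le, hpow,
      Real.sqrt_sq (Real.rpow_nonneg hN0.le _)]
    ring
  have hAeq : sobSq (q + r) φ = A := rfl
  calc Real.sqrt (sobSq q (fun n => QN N φ n - φ n))
      ≤ Real.sqrt ((N:ℝ) ^ (-(2 * r)) * (K * A)) := Real.sqrt_le_sqrt hfinal
    _ = Real.sqrt K * (N:ℝ) ^ (-r) * Real.sqrt A := hsqrt
    _ = Real.sqrt K * (N:ℝ) ^ (-r) * Real.sqrt (sobSq (q + r) φ) := by rw [hAeq]
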